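/- arXiv:1310.1406 — 3 statements merged into one kernel-verified Lean document; each statement's English description precedes it below -/
import Mathlib

section
/- Let κ₁ > 0, κ₂ > 0 with κ₂ = (1 + c)κ₁ for some c > 0. Then for every ξ ∈ ℝ², Im( ((−κ₁ + iκ₂)/(κ₁² + κ₂²)) · (|ξ|² − (κ₁+iκ₂)²)^{1/2} ) ≥ (1/2)(1 − κ₁²/κ₂²)^{1/2} ≥ (1/2)(1 − 1/(1+c)²)^{1/2}. -/
open Complex Real

/-!
Write `u = κ₁ + iκ₂` and `w = a + ib` for the principal square root of `|ξ|² - u²`, so that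
`a ≥ 0`, `a² - b² = |ξ|² + κ₂² - κ₁²` and `ab = -κ₁κ₂`. Eliminating `b` gives
`(a² - κ₂²)(a² + κ₁²) = a²|ξ|² ≥ 0`, hence `a ≥ κ₂`. The quantity to bound equals
`(κ₂a - κ₁b)/(κ₁² + κ₂²)`, and with `b = -κ₁κ₂/a` the inequality `κ₂a - κ₁b ≥ κ₁² + κ₂²` becomes
`(a - κ₂)(κ₂a - κ₁²) ≥ 0`, true because `a ≥ κ₂ > κ₁`. So the imaginary part is at least
`1 ≥ (1/2)(1 - κ₁²/κ₂²)^{1/2}`.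
-/

lemma Complex.re_cpow_one_half_nonneg (z : ℂ) : 0 ≤ (z ^ ((1 : ℂ) / 2)).re := by
  rw [one_div, cpow_inv_two_re]
  exact Real.sqrt_nonneg _

lemma Complex.cpow_one_half_sq (z : ℂ) : (z ^ ((1 : ℂ) / 2)) ^ 2 = z := by
  rw [one_div]
  exact cpow_ofNat_inv_pow z 2

lemma Complex.im_le_re_of_sq_add_sq_eq_ofReal {w u : ℂ} {t : ℝ} (ht : 0 ≤ t) (hu : u.re ≠ 0)
    (hw : 0 ≤ w.re) (h : w ^ 2 + u ^ 2 = t) : u.im ≤ w.re := by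
  have hre : w.re ^ 2 - w.im ^ 2 + (u.re ^ 2 - u.im ^ 2) = t := by
    simpa [sq] using congrArg re h
  have him : w.re * w.im + u.re * u.im = 0 := by
    have := congrArg im h
    simp only [sq, add_im, mul_im, ofReal_im] at this
    linarith
  have hfactor : (w.re ^ 2 - u.im ^ 2) * (w.re ^ 2 + u.re ^ 2) = w.re ^ 2 * t := by
    linear_combination (w.re ^ 2) * hre + (w.re * w.im - u.re * u.im) * him
  have hsq : u.im ^ 2 ≤ w.re ^ 2 := by
    have hprod : 0 ≤ (w.re ^ 2 - u.im ^ 2) * (w.re ^ 2 + u.re ^ 2) := hfactor ▸ by positivity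
    exact sub_nonneg.mp (nonneg_of_mul_nonneg_left hprod (by positivity))
  exact (abs_le_of_sq_le_sq' hsq hw).2

lemma sq_add_sq_le_mul_sub_mul {a b p q : ℝ} (hp : 0 < p) (hpq : p < q) (hqa : q ≤ a)
    (hab : a * b = -(p * q)) : p ^ 2 + q ^ 2 ≤ q * a - p * b := by
  have ha : 0 < a := by linarith
  have hfactor : a * (q * a - p * b - (p ^ 2 + q ^ 2)) = (a - q) * (q * a - p ^ 2) := by
    linear_combination (-p) * hab
  have hprod : 0 ≤ a * (q * a - p * b - (p ^ 2 + q ^ 2)) :=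
    hfactor ▸ mul_nonneg (by linarith) (by nlinarith)
  exact sub_nonneg.mp (nonneg_of_mul_nonneg_right hprod ha)

lemma Complex.im_neg_add_mul_I_div_mul (p q : ℝ) (w : ℂ) :
    ((-(p : ℂ) + q * I) / (p ^ 2 + q ^ 2) * w).im = (q * w.re - p * w.im) / (p ^ 2 + q ^ 2) := by
  rw [show (p : ℂ) ^ 2 + (q : ℂ) ^ 2 = ((p ^ 2 + q ^ 2 : ℝ) : ℂ) by push_cast; ring,
    div_mul_eq_mul_div, div_ofReal_im]
  simp only [mul_im, add_re, add_im, neg_re, neg_im, ofReal_re, ofReal_im, mul_re, I_re, I_im]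
  ring

lemma Complex.one_le_im_of_sq_add_sq_eq_ofReal {w : ℂ} {p q t : ℝ} (hp : 0 < p) (hpq : p < q)
    (ht : 0 ≤ t) (hw : 0 ≤ w.re) (h : w ^ 2 + (p + q * I) ^ 2 = t) :
    1 ≤ ((-(p : ℂ) + q * I) / (p ^ 2 + q ^ 2) * w).im := by
  have hqa : q ≤ w.re := by
    simpa using im_le_re_of_sq_add_sq_eq_ofReal ht (by simpa using hp.ne') hw h
  have hab : w.re * w.im = -(p * q) := by
    have := congrArg im h
    simp only [sq, add_im, mul_im, mul_re, add_re, ofReal_re, ofReal_im, I_re, I_im] at this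
    linarith
  rw [im_neg_add_mul_I_div_mul, one_le_div (by positivity)]
  exact sq_add_sq_le_mul_sub_mul hp hpq hqa hab

/-- uniform coercivity lower bound: for `κ₂ = (1+c)κ₁`, `c > 0`, `κ₁ > 0`,
`Im(((−κ₁+iκ₂)/(κ₁²+κ₂²))·(‖ξ‖² − (κ₁+iκ₂)²)^(1/2)) ≥ (1/2)(1 − κ₁²/κ₂²)^(1/2)
  ≥ (1/2)(1 − 1/(1+c)²)^(1/2)`. -/
theorem cfier_coercivity_bound (κ₁ κ₂ c : ℝ) (hκ₁ : 0 < κ₁) (hc : 0 < c)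
    (hκ₂ : κ₂ = (1 + c) * κ₁) (ξ : EuclideanSpace ℝ (Fin 2)) :
    (1 / 2) * Real.sqrt (1 - κ₁ ^ 2 / κ₂ ^ 2) ≤
      ((((-κ₁ : ℂ) + (κ₂ : ℂ) * Complex.I) / ((κ₁ : ℂ) ^ 2 + (κ₂ : ℂ) ^ 2)) *
        ((‖ξ‖ ^ 2 : ℂ) - ((κ₁ : ℂ) + (κ₂ : ℂ) * Complex.I) ^ 2) ^ ((1 : ℂ) / 2)).im ∧
    (1 / 2) * Real.sqrt (1 - 1 / (1 + c) ^ 2) ≤ (1 / 2) * Real.sqrt (1 - κ₁ ^ 2 / κ₂ ^ 2) := by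
  have hκ₁₂ : κ₁ < κ₂ := by rw [hκ₂]; nlinarith
  have hratio : κ₁ ^ 2 / κ₂ ^ 2 = 1 / (1 + c) ^ 2 := by rw [hκ₂]; field_simp
  refine ⟨?_, by rw [hratio]⟩
  set z : ℂ := (‖ξ‖ ^ 2 : ℂ) - ((κ₁ : ℂ) + (κ₂ : ℂ) * I) ^ 2
  have hsum : (z ^ ((1 : ℂ) / 2)) ^ 2 + ((κ₁ : ℂ) + κ₂ * I) ^ 2 = ((‖ξ‖ ^ 2 : ℝ) : ℂ) := by
    rw [cpow_one_half_sq]; push_cast; ring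
  have hsqrt : Real.sqrt (1 - κ₁ ^ 2 / κ₂ ^ 2) ≤ 1 :=
    Real.sqrt_le_one.mpr (sub_le_self _ (by positivity))
  have hone := one_le_im_of_sq_add_sq_eq_ofReal hκ₁ hκ₁₂ (by positivity)
    (re_cpow_one_half_nonneg z) hsum
  linarith
end

section
/- Let K = κ + iε with κ > 0 and ε > 0, and let γ > 0. Define α := Re((i/K)·(γ − K²)^{1/2}), where the square root is the branch with positive real part and negative imaginary part. Then α = (ε·Re((γ−K²)^{1/2}) − κ·Im((γ−K²)^{1/2}))/(κ² + ε²) and α > 0. -/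
/-!
Write `z = γ - K²`. Its imaginary part is `-2κε < 0`, so the principal square root `w = z^(1/2)`
lies in the open fourth quadrant: `Re w = √((|z| + Re z)/2) > 0` because `|Re z| < |z|`, and
`Im w = -√((|z| - Re z)/2) < 0`. Multiplying by `i/K = i K̄ / |K|²` gives
`Re((i/K) w) = (ε Re w - κ Im w)/(κ² + ε²)`, a sum of two positive terms over a positive denominator.
-/

open Complex Real

namespace Complex

lemma re_I_div_mul (K w : ℂ) : (I / K * w).re = (K.im * w.re - K.re * w.im) / normSq K := by
  simp only [mul_re, div_re, div_im, I_re, I_im]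
  ring

lemma im_ofReal_sub_sq (γ : ℝ) (K : ℂ) : ((γ : ℂ) - K ^ 2).im = -(2 * K.re * K.im) := by
  simp only [sub_im, ofReal_im, sq, mul_im]
  ring

lemma cpow_inv_two_re_pos {z : ℂ} (hz : z.im ≠ 0) : 0 < (z ^ (2⁻¹ : ℂ)).re := by
  have hre : -z.re < ‖z‖ := (neg_le_abs z.re).trans_lt (abs_re_lt_norm.mpr hz)
  rw [cpow_inv_two_re]
  exact Real.sqrt_pos.mpr (by linarith)

lemma cpow_inv_two_im_neg {z : ℂ} (hz : z.im < 0) : (z ^ (2⁻¹ : ℂ)).im < 0 := by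
  have hre : z.re < ‖z‖ := (le_abs_self z.re).trans_lt (abs_re_lt_norm.mpr hz.ne)
  rw [cpow_inv_two_im_eq_neg_sqrt hz, neg_lt_zero]
  exact Real.sqrt_pos.mpr (by linarith)

end Complex

theorem ps_alpha_positive_general (κ ε γ : ℝ) (hκ : 0 < κ) (hε : 0 < ε) :
    let K : ℂ := (κ : ℂ) + (ε : ℂ) * Complex.I
    let w : ℂ := ((γ : ℂ) - K ^ 2) ^ ((1 : ℂ) / 2)
    let α : ℝ := ((Complex.I / K) * w).re
    α = (ε * w.re - κ * w.im) / (κ ^ 2 + ε ^ 2) ∧ 0 < α := by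
  intro K w α
  have hKre : K.re = κ := by simp [K]
  have hKim : K.im = ε := by simp [K]
  have hα : α = (ε * w.re - κ * w.im) / (κ ^ 2 + ε ^ 2) := by
    show (I / K * w).re = _
    rw [re_I_div_mul, normSq_apply, hKre, hKim, ← sq, ← sq]
  have hzim : ((γ : ℂ) - K ^ 2).im < 0 := by
    rw [im_ofReal_sub_sq, hKre, hKim]
    linarith [mul_pos hκ hε]
  have hw : w = ((γ : ℂ) - K ^ 2) ^ (2⁻¹ : ℂ) := by rw [← one_div]
  have hwre : 0 < w.re := hw ▸ cpow_inv_two_re_pos hzim.ne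
  have hwim : w.im < 0 := hw ▸ cpow_inv_two_im_neg hzim
  refine ⟨hα, hα ▸ div_pos ?_ (by positivity)⟩
  linarith [mul_pos hε hwre, mul_pos hκ (neg_pos.mpr hwim)]

/-- for `K = κ + iε` with `κ > 0`, `ε > 0` and `γ > 0`,
`α := Re((i/K)(γ − K²)^(1/2))` satisfies
`α = (ε·Re((γ−K²)^(1/2)) − κ·Im((γ−K²)^(1/2)))/(κ² + ε²)` and `α > 0`. -/
theorem ps_alpha_positive (κ ε γ : ℝ) (hκ : 0 < κ) (hε : 0 < ε) (hγ : 0 < γ) :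
    let K : ℂ := (κ : ℂ) + (ε : ℂ) * Complex.I
    let w : ℂ := ((γ : ℂ) - K ^ 2) ^ ((1 : ℂ) / 2)
    let α : ℝ := ((Complex.I / K) * w).re
    α = (ε * w.re - κ * w.im) / (κ ^ 2 + ε ^ 2) ∧ 0 < α :=
  ps_alpha_positive_general κ ε γ hκ hε
end

section
/- Let K = κ + iε with κ > 0, ε > 0. For each real γ > 0 define α(γ) := ε·Re((γ−K²)^{−1/2}) + κ·Im((γ−K²)^{−1/2}) + ( ε/(κ²+ε²)·Re((γ−K²)^{−1/2}) − κ/(κ²+ε²)·Im((γ−K²)^{−1/2}) )·γ. Then α(γ) = Re( (i/K)·(γ−K²)^{1/2} ) = (ε·Re((γ−K²)^{1/2}) − κ·Im((γ−K²)^{1/2}))/(κ²+ε²), and α(γ) > 0. -/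
/-!
With `c = γ - K²` and `w = c^{1/2}`, the coefficients of `α` combine to
`Re (i (γ/K - K) c^{-1/2}) = Re ((i/K) c c^{-1/2}) = Re ((i/K) w)`.
Since `Im c = -2κε < 0`, the principal root `w` lies in the fourth quadrant,
so `ε Re w - κ Im w > 0`.
-/

open Complex Real

namespace Complex

lemma re_cpow_inv_two_pos {x : ℂ} (hx : x ∈ slitPlane) : 0 < (x ^ (2⁻¹ : ℂ)).re := by
  rw [cpow_inv_two_re]
  apply Real.sqrt_pos.2
  rcases hx with hre | him
  · have := re_le_norm x
    linarith
  · have := abs_re_lt_norm.2 him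
    have := neg_abs_le x.re
    linarith

lemma im_cpow_inv_two_neg {x : ℂ} (hx : x.im < 0) : (x ^ (2⁻¹ : ℂ)).im < 0 := by
  rw [cpow_inv_two_im_eq_neg_sqrt hx, neg_neg_iff_pos, Real.sqrt_pos]
  have := abs_re_lt_norm.2 hx.ne
  have := le_abs_self x.re
  linarith

lemma self_mul_cpow_neg_inv_two (x : ℂ) : x * x ^ (-(2⁻¹ : ℂ)) = x ^ (2⁻¹ : ℂ) := by
  rcases eq_or_ne x 0 with rfl | hx
  · simp
  · conv_rhs => rw [show (2⁻¹ : ℂ) = 1 + -2⁻¹ by norm_num, cpow_add _ _ hx, cpow_one]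

end Complex

theorem ps_calderon_complex_eigen_positive_general (κ ε γ : ℝ) (hκ : 0 < κ) (hε : 0 < ε) :
    let K : ℂ := (κ : ℂ) + (ε : ℂ) * Complex.I
    let z : ℂ := ((γ : ℂ) - K ^ 2) ^ (-(1 : ℂ) / 2)
    let w : ℂ := ((γ : ℂ) - K ^ 2) ^ ((1 : ℂ) / 2)
    let α : ℝ := ε * z.re + κ * z.im +
      (ε / (κ ^ 2 + ε ^ 2) * z.re - κ / (κ ^ 2 + ε ^ 2) * z.im) * γ
    α = ((Complex.I / K) * w).re ∧
      α = (ε * w.re - κ * w.im) / (κ ^ 2 + ε ^ 2) ∧ 0 < α := by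
  intro K z w α
  have hKre : K.re = κ := by simp [K]
  have hKim : K.im = ε := by simp [K]
  have hK : K ≠ 0 := fun h => hκ.ne' (by rw [← hKre, h, zero_re])
  have hKnorm : normSq K = κ ^ 2 + ε ^ 2 := by rw [normSq_apply, hKre, hKim]; ring
  have hcim : ((γ : ℂ) - K ^ 2).im < 0 := by
    rw [sub_im, ofReal_im, pow_two, mul_im, hKre, hKim]
    linarith [mul_pos hκ hε]
  have hwz : ((γ : ℂ) - K ^ 2) * z = w := by
    simpa only [z, w, neg_div, one_div] using self_mul_cpow_neg_inv_two ((γ : ℂ) - K ^ 2)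
  have hw : ((I / K) * w).re = (ε * w.re - κ * w.im) / (κ ^ 2 + ε ^ 2) := by
    rw [re_I_div_mul, hKre, hKim, hKnorm]
  have hα : α = ((I / K) * w).re := by
    have hcoef : -I * K + γ * (I / K) = I / K * (γ - K ^ 2) := by field_simp; ring
    calc α = ((-I * K + γ * (I / K)) * z).re := by
            rw [add_mul, add_re, mul_assoc (γ : ℂ), re_ofReal_mul, re_I_div_mul, hKre, hKim,
              hKnorm, neg_mul, neg_mul, neg_re, mul_assoc, mul_re, I_re, I_im, mul_re, mul_im,
              hKre, hKim]
            ring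
      _ = ((I / K) * w).re := by rw [hcoef, mul_assoc, hwz]
  have hw_re : 0 < w.re := by simpa [w, one_div] using re_cpow_inv_two_pos (Or.inr hcim.ne)
  have hw_im : w.im < 0 := by simpa [w, one_div] using im_cpow_inv_two_neg hcim
  have hnum : 0 < ε * w.re - κ * w.im := by
    linarith [mul_pos hε hw_re, mul_neg_of_pos_of_neg hκ hw_im]
  exact ⟨hα, hα.trans hw, hα.trans hw ▸ div_pos hnum (by positivity)⟩

/-- for `K = κ + iε` with `κ > 0`, `ε > 0` and each real `γ > 0`, the quantity
`α(γ) := ε·Re((γ−K²)^(−1/2)) + κ·Im((γ−K²)^(−1/2))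
        + (ε/(κ²+ε²)·Re((γ−K²)^(−1/2)) − κ/(κ²+ε²)·Im((γ−K²)^(−1/2)))·γ`
equals `Re((i/K)(γ−K²)^(1/2)) = (ε·Re((γ−K²)^(1/2)) − κ·Im((γ−K²)^(1/2)))/(κ²+ε²)`,
and is strictly positive. -/
theorem ps_calderon_complex_eigen_positive (κ ε γ : ℝ) (hκ : 0 < κ) (hε : 0 < ε)
    (hγ : 0 < γ) :
    let K : ℂ := (κ : ℂ) + (ε : ℂ) * Complex.I
    let z : ℂ := ((γ : ℂ) - K ^ 2) ^ (-(1 : ℂ) / 2)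
    let w : ℂ := ((γ : ℂ) - K ^ 2) ^ ((1 : ℂ) / 2)
    let α : ℝ := ε * z.re + κ * z.im +
      (ε / (κ ^ 2 + ε ^ 2) * z.re - κ / (κ ^ 2 + ε ^ 2) * z.im) * γ
    α = ((Complex.I / K) * w).re ∧
      α = (ε * w.re - κ * w.im) / (κ ^ 2 + ε ^ 2) ∧ 0 < α :=
  ps_calderon_complex_eigen_positive_general κ ε γ hκ hε
end
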